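/- arXiv:2406.14125 — 2 statements merged into one kernel-verified Lean document; each statement's English description precedes it below -/
import Mathlib

section
/- Let t ≥ 2 and h ≥ 1 be integers and set n = h(2t+2). Consider the binary words x1 = 0^{ht−1} 1 0^{h(t+2)} and x2 = 0^{ht} 1 0^{h(t+2)−1} of length n, and let M = C(n,t) − C(ht−1, ⌊t/2⌋)·C(h(t+2)−1, ⌈t/2⌉). Then: (1) there exist sets D1 and D2 of deletion vectors for length-n words, each vector of weight exactly t, with |D1| = |D2| = M, such that the output multiset of D1 on x1 equals the output multiset of D2 on x2; and (2) for any such pair of sets of weight-exactly-t deletion vectors with equal output multisets on x1 and x2, |D1| ≤ M. In other words, exactly M + 1 channels are enough to distinguish x1 from x2 in the multiset model with exactly t deletions per channel. -/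
/-!
Deleting a weight-`t` vector `S` from the one-hot word with its `1` at `p` leaves a word that is
determined by `posAfterDel p S`, the index of that `1` after the deletion (`none` if it was
deleted). Equal output multisets therefore amount to choosing, for every key `b`, equally many
sets from the fibres over `b` of `posAfterDel p₁` and `posAfterDel p₂`, of sizes `F₁ b` and
`F₂ b`. So the extremal size is `∑ b, min (F₁ b) (F₂ b) = C(n,t) - ∑ b, (F₁ b - F₂ b)`.
For adjacent positions `p, p + 1`, Pascal's rule turns `F₁ - F₂` at the key `p - c` into
`g c - g (c + 1)` with `g c = C(p,c) C(n-2-p,t-c)`. For the given parameters `g` increases up to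
`⌊t/2⌋` and decreases afterwards, so the sum telescopes to `g ⌊t/2⌋`.
-/

/-- Applying a deletion vector `S` (a set of coordinate positions) to a word
`x` of length `n`: delete the entries at positions in `S`, keeping the rest in order. -/
def delWord {q n : ℕ} (x : Fin n → Fin q) (S : Finset (Fin n)) : List (Fin q) :=
  ((Finset.univ \ S).sort (· ≤ ·)).map x

open Finset Function

section FiberMatching

variable {α β : Type*}

theorem count_map_val_eq_card_filter [DecidableEq β] (f : α → β) (D : Finset α) (b : β) :
    (D.val.map f).count b = #{a ∈ D | f a = b} := by
  simp [Multiset.count_map, Finset.card_def, Finset.filter_val, eq_comm]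

theorem card_le_sum_min_card_fiber [DecidableEq β] {f₁ f₂ : α → β} {U₁ U₂ D₁ D₂ : Finset α}
    {V : Finset β} (h₁ : D₁ ⊆ U₁) (h₂ : D₂ ⊆ U₂) (hV : ∀ a ∈ D₁, f₁ a ∈ V)
    (h : D₁.val.map f₁ = D₂.val.map f₂) :
    #D₁ ≤ ∑ b ∈ V, min #{a ∈ U₁ | f₁ a = b} #{a ∈ U₂ | f₂ a = b} := by
  rw [card_eq_sum_card_fiberwise hV]
  refine sum_le_sum fun b _ => le_min (card_le_card (filter_subset_filter _ h₁)) ?_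
  rw [← count_map_val_eq_card_filter, h, count_map_val_eq_card_filter]
  exact card_le_card (filter_subset_filter _ h₂)

theorem card_filter_biUnion_of_mapsTo [DecidableEq α] [DecidableEq β] {f : α → β}
    {E : β → Finset α} (hE : ∀ b, ∀ a ∈ E b, f a = b) (V : Finset β) (w : β) :
    #{a ∈ V.biUnion E | f a = w} = if w ∈ V then #(E w) else 0 := by
  split_ifs with hw
  · congr 1
    ext a
    simp only [mem_filter, mem_biUnion]
    constructor
    · rintro ⟨⟨b, -, hab⟩, rfl⟩
      rwa [hE b a hab]
    · exact fun ha => ⟨⟨w, hw, ha⟩, hE w a ha⟩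
  · rw [card_eq_zero, filter_eq_empty_iff]
    rintro a ha rfl
    obtain ⟨b, hb, hab⟩ := mem_biUnion.1 ha
    exact hw (hE b a hab ▸ hb)

theorem card_biUnion_of_mapsTo [DecidableEq α] {f : α → β} {E : β → Finset α}
    (hE : ∀ b, ∀ a ∈ E b, f a = b) (V : Finset β) :
    #(V.biUnion E) = ∑ b ∈ V, #(E b) :=
  card_biUnion fun b _ c _ hbc => disjoint_left.2 fun a hab hac =>
    hbc ((hE b a hab).symm.trans (hE c a hac))

theorem exists_card_eq_sum_min_card_fiber [DecidableEq α] [DecidableEq β] (f₁ f₂ : α → β)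
    (U₁ U₂ : Finset α) (V : Finset β) :
    ∃ D₁ ⊆ U₁, ∃ D₂ ⊆ U₂,
      #D₁ = ∑ b ∈ V, min #{a ∈ U₁ | f₁ a = b} #{a ∈ U₂ | f₂ a = b} ∧
      #D₂ = ∑ b ∈ V, min #{a ∈ U₁ | f₁ a = b} #{a ∈ U₂ | f₂ a = b} ∧
      D₁.val.map f₁ = D₂.val.map f₂ := by
  choose E₁ hE₁ using fun b => exists_subset_card_eq (min_le_left #{a ∈ U₁ | f₁ a = b}
    #{a ∈ U₂ | f₂ a = b})
  choose E₂ hE₂ using fun b => exists_subset_card_eq (min_le_right #{a ∈ U₁ | f₁ a = b}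
    #{a ∈ U₂ | f₂ a = b})
  have hf₁ : ∀ b, ∀ a ∈ E₁ b, f₁ a = b := fun b a ha => (mem_filter.1 ((hE₁ b).1 ha)).2
  have hf₂ : ∀ b, ∀ a ∈ E₂ b, f₂ a = b := fun b a ha => (mem_filter.1 ((hE₂ b).1 ha)).2
  refine ⟨V.biUnion E₁, biUnion_subset.2 fun b _ => (hE₁ b).1.trans (filter_subset _ _),
    V.biUnion E₂, biUnion_subset.2 fun b _ => (hE₂ b).1.trans (filter_subset _ _), ?_, ?_, ?_⟩
  · rw [card_biUnion_of_mapsTo hf₁]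
    exact sum_congr rfl fun b _ => (hE₁ b).2
  · rw [card_biUnion_of_mapsTo hf₂]
    exact sum_congr rfl fun b _ => (hE₂ b).2
  · ext w
    rw [count_map_val_eq_card_filter, count_map_val_eq_card_filter,
      card_filter_biUnion_of_mapsTo hf₁, card_filter_biUnion_of_mapsTo hf₂, (hE₁ w).2, (hE₂ w).2]

end FiberMatching

theorem sum_range_tsub_succ_of_unimodal {f : ℕ → ℕ} {K N : ℕ} (hKN : K ≤ N)
    (hup : ∀ c < K, f c ≤ f (c + 1)) (hdown : ∀ c ≥ K, f (c + 1) ≤ f c) :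
    ∑ c ∈ range N, (f c - f (c + 1)) = f K - f N := by
  induction N, hKN using Nat.le_induction with
  | base =>
    rw [Nat.sub_self]
    exact sum_eq_zero fun c hc => Nat.sub_eq_zero_of_le (hup c (mem_range.1 hc))
  | succ N hKN ih =>
    have hNK : f N ≤ f K := antitoneOn_nat_Ici_of_succ_le hdown (Set.mem_Ici.2 le_rfl) hKN hKN
    have hN := hdown N hKN
    rw [sum_range_succ, ih]
    omega

theorem card_filter_powersetCard_card_inter {α : Type*} [DecidableEq α] {s₁ s₂ : Finset α}
    (h : Disjoint s₁ s₂) (c e : ℕ) :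
    #{T ∈ powersetCard (c + e) (s₁ ∪ s₂) | #(T ∩ s₁) = c} = (#s₁).choose c * (#s₂).choose e := by
  have hsplit {A B : Finset α} (hA : A ⊆ s₁) (hB : B ⊆ s₂) :
      (A ∪ B) ∩ s₁ = A ∧ (A ∪ B) ∩ s₂ = B := by
    constructor <;> ext x <;> simp only [mem_inter, mem_union] <;>
      constructor <;> grind [disjoint_left]
  rw [← card_powersetCard, ← card_powersetCard, ← card_product]
  refine card_bij' (fun T _ => (T ∩ s₁, T ∩ s₂)) (fun P _ => P.1 ∪ P.2) ?_ ?_ ?_ ?_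
  · intro T hT
    simp only [mem_filter, mem_powersetCard] at hT
    obtain ⟨⟨hTs, hTc⟩, hT₁⟩ := hT
    have : #(T ∩ s₁) + #(T ∩ s₂) = c + e := by
      rw [← card_union_of_disjoint (h.mono inter_subset_right inter_subset_right),
        ← inter_union_distrib_left, inter_eq_left.2 hTs, hTc]
    simp only [mem_product, mem_powersetCard]
    exact ⟨⟨inter_subset_right, hT₁⟩, inter_subset_right, by omega⟩
  · rintro ⟨A, B⟩ hAB
    simp only [mem_product, mem_powersetCard] at hAB
    obtain ⟨⟨hA, hAc⟩, hB, hBc⟩ := hAB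
    simp only [mem_filter, mem_powersetCard]
    refine ⟨⟨union_subset_union hA hB, ?_⟩, by rw [(hsplit hA hB).1, hAc]⟩
    rw [card_union_of_disjoint (h.mono hA hB), hAc, hBc]
  · intro T hT
    simp only [mem_filter, mem_powersetCard] at hT
    rw [← inter_union_distrib_left, inter_eq_left.2 hT.1.1]
  · rintro ⟨A, B⟩ hAB
    simp only [mem_product, mem_powersetCard] at hAB
    obtain ⟨h₁, h₂⟩ := hsplit hAB.1.1 hAB.2.1
    exact Prod.ext h₁ h₂

theorem Finset.sort_eq_sort_filter_lt_append {α : Type*} [LinearOrder α] {s : Finset α} {p : α}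
    (hp : p ∈ s) :
    s.sort (· ≤ ·) = {a ∈ s | a < p}.sort (· ≤ ·) ++ p :: {a ∈ s | p < a}.sort (· ≤ ·) := by
  refine (sortedLT_sort s).eq_of_mem_iff ?_ fun a => ?_
  · simp only [List.sortedLT_iff_pairwise, List.pairwise_append, List.pairwise_cons, mem_sort,
      mem_filter, List.mem_cons]
    exact ⟨(sortedLT_sort _).pairwise, ⟨fun b hb => hb.2, (sortedLT_sort _).pairwise⟩,
      fun a ha b hb => hb.elim (· ▸ ha.2) fun hb => ha.2.trans hb.2⟩
  · simp only [mem_sort, List.mem_append, List.mem_cons, mem_filter]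
    rcases lt_trichotomy a p with h | rfl | h
    · simp [h, h.not_gt, h.ne]
    · simp [hp]
    · simp [h, h.not_gt, h.ne']

def posAfterDel {n : ℕ} (p : Fin n) (S : Finset (Fin n)) : Option ℕ :=
  if p ∈ S then none else some #{i ∈ Iio p | i ∉ S}

def oneHotWord (L : ℕ) : Option ℕ → List (Fin 2)
  | none => List.replicate L 0
  | some a => List.replicate a 0 ++ 1 :: List.replicate (L - 1 - a) 0

theorem oneHotWord_injective (L : ℕ) : Injective (oneHotWord L) := by
  rintro (_ | a) (_ | b) h
  · rfl
  · simpa [oneHotWord] using congrArg (1 ∈ ·) h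
  · simpa [oneHotWord] using congrArg (1 ∈ ·) h
  · have := congrArg (List.idxOf 1) h
    simp only [oneHotWord] at this
    rw [List.idxOf_append_of_notMem (by simp), List.idxOf_append_of_notMem (by simp)] at this
    simpa using this

theorem map_eq_replicate_zero_of_notMem {n : ℕ} {p : Fin n} {l : List (Fin n)} (hp : p ∉ l) :
    l.map (fun i : Fin n => if (i : ℕ) = p then (1 : Fin 2) else 0)
      = List.replicate l.length 0 := by
  rw [List.eq_replicate_iff, List.length_map]
  refine ⟨rfl, fun b hb => ?_⟩
  obtain ⟨i, hi, rfl⟩ := List.mem_map.1 hb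
  rw [if_neg fun h => hp ((Fin.ext h : i = p) ▸ hi)]

theorem delWord_indicator {n : ℕ} (p : Fin n) (S : Finset (Fin n)) :
    delWord (fun i => if (i : ℕ) = p then (1 : Fin 2) else 0) S
      = oneHotWord (n - #S) (posAfterDel p S) := by
  have hlen :
      (delWord (fun i => if (i : ℕ) = p then (1 : Fin 2) else 0) S).length = n - #S := by
    simp [delWord, card_sdiff]
  unfold posAfterDel
  split_ifs with hp
  · rw [oneHotWord, ← hlen, delWord, List.length_map]
    exact map_eq_replicate_zero_of_notMem (by simp [hp])
  · have hsplit := sort_eq_sort_filter_lt_append (show p ∈ univ \ S by simp [hp])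
    have hbelow : {a ∈ univ \ S | a < p} = {i ∈ Iio p | i ∉ S} := by
      ext i; simp [and_comm]
    rw [delWord, hsplit, List.map_append, List.map_cons,
      map_eq_replicate_zero_of_notMem (by simp), map_eq_replicate_zero_of_notMem (by simp),
      if_pos rfl] at hlen ⊢
    simp only [length_sort, hbelow, List.length_append, List.length_replicate,
      List.length_cons] at hlen ⊢
    rw [oneHotWord, ← hlen]
    congr 3
    omega

theorem map_delWord_indicator {n t : ℕ} {D : Finset (Finset (Fin n))} (hD : ∀ S ∈ D, #S = t)
    (p : Fin n) :
    D.val.map (delWord fun i => if (i : ℕ) = p then (1 : Fin 2) else 0)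
      = (D.val.map (posAfterDel p)).map (oneHotWord (n - t)) := by
  rw [Multiset.map_map]
  exact Multiset.map_congr rfl fun S hS => by rw [comp_apply, delWord_indicator, hD S hS]

section PosAfterDel

variable {n : ℕ}

theorem posAfterDel_eq_none_iff {p : Fin n} {S : Finset (Fin n)} :
    posAfterDel p S = none ↔ p ∈ S := by
  unfold posAfterDel; split_ifs <;> simp [*]

theorem posAfterDel_eq_some_iff {p : Fin n} {S : Finset (Fin n)} {a : ℕ} :
    posAfterDel p S = some a ↔ p ∉ S ∧ #(S ∩ Iio p) + a = p := by
  have h : #(S ∩ Iio p) + #{i ∈ Iio p | i ∉ S} = p := by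
    rw [inter_comm, ← filter_mem_eq_inter, card_filter_add_card_filter_not, Fin.card_Iio]
  unfold posAfterDel
  split_ifs with hp
  · simp [hp]
  · simp only [Option.some.injEq, hp, not_false_eq_true, true_and]
    omega

theorem posAfterDel_mem_insertNone_range (p : Fin n) (S : Finset (Fin n)) :
    posAfterDel p S ∈ insertNone (range n) := by
  rw [mem_insertNone]
  intro a ha
  have := (posAfterDel_eq_some_iff.1 (Option.mem_def.1 ha)).2
  simp only [mem_range]
  omega

theorem sum_card_filter_posAfterDel (p : Fin n) (t : ℕ) :
    ∑ b ∈ insertNone (range n), #{S ∈ powersetCard t univ | posAfterDel p S = b}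
      = n.choose t := by
  rw [← card_eq_sum_card_fiberwise fun S _ => posAfterDel_mem_insertNone_range p S,
    card_powersetCard, card_univ, Fintype.card_fin]

theorem card_filter_posAfterDel_eq_none (p : Fin n) {t : ℕ} (ht : 0 < t) :
    #{S ∈ powersetCard t univ | posAfterDel p S = none} = (n - 1).choose (t - 1) := by
  simp_rw [posAfterDel_eq_none_iff, ← singleton_subset_iff]
  rw [card_filter_powersetCard_subset _ _ _ (subset_univ _) (by rwa [card_singleton]),
    card_singleton, card_univ, Fintype.card_fin]

theorem card_filter_posAfterDel_eq_some (p : Fin n) {a c : ℕ} (hac : c + a = p) (e : ℕ) :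
    #{S ∈ powersetCard (c + e) univ | posAfterDel p S = some a}
      = (p : ℕ).choose c * (n - 1 - p).choose e := by
  have hdisj : Disjoint (Iio p) (Ioi p) := disjoint_left.2 fun i hi hi' =>
    (mem_Iio.1 hi).asymm (mem_Ioi.1 hi')
  rw [← Fin.card_Ioi, ← Fin.card_Iio, ← card_filter_powersetCard_card_inter hdisj]
  congr 1
  ext S
  have hS : S ⊆ Iio p ∪ Ioi p ↔ p ∉ S := by
    refine ⟨fun h hp => by simpa using h hp, fun hp i hi => ?_⟩
    rcases lt_trichotomy i p with h | rfl | h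
    · simp [h]
    · exact absurd hi hp
    · simp [h]
  simp only [mem_filter, mem_powersetCard, subset_univ, true_and, posAfterDel_eq_some_iff, hS]
  exact ⟨fun ⟨h₁, h₂, h₃⟩ => ⟨⟨h₂, h₁⟩, by omega⟩, fun ⟨⟨h₁, h₂⟩, h₃⟩ => ⟨h₂, h₁, by omega⟩⟩

theorem card_filter_posAfterDel_eq_some_eq_zero (p : Fin n) {a t : ℕ} (h : p < a ∨ a + t < p) :
    #{S ∈ powersetCard t univ | posAfterDel p S = some a} = 0 := by
  rw [card_eq_zero, filter_eq_empty_iff]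
  intro S hS hSa
  have h₁ := (posAfterDel_eq_some_iff.1 hSa).2
  have h₂ : #(S ∩ Iio p) ≤ t :=
    (card_le_card inter_subset_left).trans (mem_powersetCard_univ.1 hS).le
  omega

end PosAfterDel

-- The guard matters for `c > t`, where the truncated `t - c = 0` would give `A.choose c`.
def splitChoose (A B t c : ℕ) : ℕ := if c ≤ t then A.choose c * B.choose (t - c) else 0

theorem splitChoose_succ_mul (A B t c : ℕ) (hc : c < t) :
    (c + 1) * (B + c + 1 - t) * splitChoose A B t (c + 1)
      = (A - c) * (t - c) * splitChoose A B t c := by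
  obtain ⟨e, rfl⟩ : ∃ e, t = c + e + 1 := ⟨t - c - 1, by omega⟩
  rw [splitChoose, splitChoose, if_pos (by omega), if_pos (by omega),
    show c + e + 1 - (c + 1) = e by omega, show c + e + 1 - c = e + 1 by omega,
    show B + c + 1 - (c + e + 1) = B - e by omega]
  calc (c + 1) * (B - e) * (A.choose (c + 1) * B.choose e)
      = (A.choose (c + 1) * (c + 1)) * (B.choose e * (B - e)) := by ring
    _ = (A.choose c * (A - c)) * (B.choose (e + 1) * (e + 1)) := by
      rw [Nat.choose_succ_right_eq, Nat.choose_succ_right_eq]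
    _ = (A - c) * (e + 1) * (A.choose c * B.choose (e + 1)) := by ring

theorem splitChoose_le_succ {A B t c : ℕ} (hc : c < t) (hBt : t < B + c + 1)
    (h : (c + 1) * (B + c + 1 - t) ≤ (A - c) * (t - c)) :
    splitChoose A B t c ≤ splitChoose A B t (c + 1) := by
  refine Nat.le_of_mul_le_mul_left ?_ (Nat.mul_pos c.succ_pos (Nat.sub_pos_of_lt hBt))
  rw [splitChoose_succ_mul A B t c hc]
  exact Nat.mul_le_mul_right _ h

theorem splitChoose_succ_le {A B t c : ℕ} (hBt : t < B + c + 1)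
    (h : (A - c) * (t - c) ≤ (c + 1) * (B + c + 1 - t)) :
    splitChoose A B t (c + 1) ≤ splitChoose A B t c := by
  by_cases hc : c < t
  · refine Nat.le_of_mul_le_mul_left ?_ (Nat.mul_pos c.succ_pos (Nat.sub_pos_of_lt hBt))
    rw [splitChoose_succ_mul A B t c hc]
    exact Nat.mul_le_mul_right _ h
  · rw [splitChoose, if_neg (by omega)]
    exact Nat.zero_le _

section Unimodal

variable {h t A B : ℕ}

theorem splitChoose_le_succ_of_lt_half (hh : 1 ≤ h) (hA : A + 1 = h * t)
    (hB : B + 1 = h * (t + 2)) {c : ℕ} (hc : c < t / 2) :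
    splitChoose A B t c ≤ splitChoose A B t (c + 1) := by
  obtain ⟨u, rfl⟩ : ∃ u, t = 2 * c + 2 + u := ⟨t - 2 * c - 2, by omega⟩
  obtain ⟨v, rfl⟩ : ∃ v, h = v + 1 := ⟨h - 1, by omega⟩
  have hA' : A = v * (2 * c + 2 + u) + 2 * c + 1 + u := by linarith
  have hB' : B = v * (2 * c + 2 + u) + 2 * v + 2 * c + 3 + u := by linarith
  subst hA' hB'
  refine splitChoose_le_succ (by omega) (by omega) ?_
  rw [show 2 * c + 2 + u - c = c + 2 + u by omega,
    show v * (2 * c + 2 + u) + 2 * v + 2 * c + 3 + u + c + 1 - (2 * c + 2 + u)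
      = v * (2 * c + 2 + u) + 2 * v + c + 2 by omega,
    show v * (2 * c + 2 + u) + 2 * c + 1 + u - c = v * (2 * c + 2 + u) + c + 1 + u by omega]
  have key : (v * (2 * c + 2 + u) + c + 1 + u) * (c + 2 + u)
      = (c + 1) * (v * (2 * c + 2 + u) + 2 * v + c + 2)
        + (v * u * (2 * c + 3 + u) + u * (2 * c + 3 + u)) := by ring
  omega

theorem splitChoose_succ_le_of_half_le (hh : 1 ≤ h) (hA : A + 1 = h * t)
    (hB : B + 1 = h * (t + 2)) {c : ℕ} (hc : t / 2 ≤ c) :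
    splitChoose A B t (c + 1) ≤ splitChoose A B t c := by
  have hht : t ≤ h * t := Nat.le_mul_of_pos_left t hh
  have hB' : B = h * t + 2 * h - 1 := by rw [mul_add] at hB; omega
  have h1 : t < B + c + 1 := by omega
  have h2 : A - c ≤ B + c + 1 - t := by omega
  have h3 : t - c ≤ c + 1 := by omega
  exact splitChoose_succ_le h1 ((Nat.mul_le_mul h2 h3).trans_eq (mul_comm _ _))

end Unimodal

theorem card_filter_posAfterDel_tsub_of_adjacent {n t c : ℕ} {p q : Fin n}
    (hpq : (q : ℕ) = p + 1) (hcp : c ≤ p) :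
    #{S ∈ powersetCard t univ | posAfterDel p S = some (p - c)}
      - #{S ∈ powersetCard t univ | posAfterDel q S = some (p - c)}
      = splitChoose p (n - 2 - p) t c - splitChoose p (n - 2 - p) t (c + 1) := by
  have hB : n - 1 - p = n - 2 - p + 1 := by omega
  have hq : n - 1 - q = n - 2 - p := by omega
  rcases lt_trichotomy c t with hct | rfl | htc
  · obtain ⟨e, rfl⟩ : ∃ e, t = c + (e + 1) := ⟨t - c - 1, by omega⟩
    rw [card_filter_posAfterDel_eq_some p (by omega), show c + (e + 1) = c + 1 + e by omega,
      card_filter_posAfterDel_eq_some q (by omega), hB, hq, hpq, splitChoose, splitChoose,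
      if_pos (by omega), if_pos (by omega), show c + 1 + e - c = e + 1 by omega,
      show c + 1 + e - (c + 1) = e by omega, Nat.choose_succ_succ', Nat.choose_succ_succ',
      mul_add, add_mul, Nat.add_sub_add_left]
  · rw [← add_zero c, card_filter_posAfterDel_eq_some p (by omega), add_zero,
      card_filter_posAfterDel_eq_some_eq_zero q (by omega), splitChoose, splitChoose,
      if_pos le_rfl, if_neg (by omega)]
    simp
  · rw [card_filter_posAfterDel_eq_some_eq_zero p (by omega), splitChoose, splitChoose,
      if_neg (by omega), if_neg (by omega), Nat.zero_sub]

theorem sum_card_filter_posAfterDel_tsub_of_adjacent {n t : ℕ} (ht : 0 < t) {p q : Fin n}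
    (hpq : (q : ℕ) = p + 1) :
    ∑ b ∈ insertNone (range n), (#{S ∈ powersetCard t univ | posAfterDel p S = b}
        - #{S ∈ powersetCard t univ | posAfterDel q S = b})
      = ∑ c ∈ range (p + 1),
          (splitChoose p (n - 2 - p) t c - splitChoose p (n - 2 - p) t (c + 1)) := by
  have hbeyond : ∀ a ∈ range n, a ∉ range (p + 1) →
      #{S ∈ powersetCard t univ | posAfterDel p S = some a}
        - #{S ∈ powersetCard t univ | posAfterDel q S = some a} = 0 := fun a _ ha => by
    rw [mem_range, not_lt] at ha
    rw [card_filter_posAfterDel_eq_some_eq_zero p (by omega), Nat.zero_sub]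
  rw [sum_insertNone, card_filter_posAfterDel_eq_none p ht, card_filter_posAfterDel_eq_none q ht,
    Nat.sub_self, zero_add, ← sum_subset (range_subset_range.2 (by omega)) hbeyond,
    ← sum_range_reflect]
  refine sum_congr rfl fun c hc => ?_
  rw [show (p : ℕ) + 1 - 1 - c = p - c by omega]
  exact card_filter_posAfterDel_tsub_of_adjacent hpq (by simp only [mem_range] at hc; omega)

theorem sum_min_card_filter_posAfterDel {n t h : ℕ} (ht : 2 ≤ t) (hh : 1 ≤ h)
    (hn : n = h * (2 * t + 2)) {p q : Fin n} (hp : (p : ℕ) = h * t - 1) (hq : (q : ℕ) = h * t) :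
    ∑ b ∈ insertNone (range n),
        min #{S ∈ powersetCard t univ | posAfterDel p S = b}
          #{S ∈ powersetCard t univ | posAfterDel q S = b}
      = n.choose t - (h * t - 1).choose (t / 2) * (h * (t + 2) - 1).choose ((t + 1) / 2) := by
  have hht : t ≤ h * t := Nat.le_mul_of_pos_left t hh
  have hn' : n = 2 * (h * t) + 2 * h := by rw [hn]; ring
  have hB : h * (t + 2) = h * t + 2 * h := by ring
  have hpeak : ∑ c ∈ range (p + 1), (splitChoose p (n - 2 - p) t c
      - splitChoose p (n - 2 - p) t (c + 1))
        = (h * t - 1).choose (t / 2) * (h * (t + 2) - 1).choose ((t + 1) / 2) := by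
    have hA : (p : ℕ) + 1 = h * t := by omega
    have hB' : n - 2 - p + 1 = h * (t + 2) := by omega
    rw [sum_range_tsub_succ_of_unimodal (f := splitChoose p (n - 2 - p) t) (K := t / 2) (by omega)
        (fun c hc => splitChoose_le_succ_of_lt_half hh hA hB' hc)
        (fun c hc => splitChoose_succ_le_of_half_le hh hA hB' hc),
      splitChoose, splitChoose, if_pos (by omega), Nat.choose_succ_self, zero_mul, ite_self,
      Nat.sub_zero, hp, show n - 2 - (h * t - 1) = h * (t + 2) - 1 by omega,
      show t - t / 2 = (t + 1) / 2 by omega]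
  have hsplit : ∑ b ∈ insertNone (range n),
      (min #{S ∈ powersetCard t univ | posAfterDel p S = b}
          #{S ∈ powersetCard t univ | posAfterDel q S = b}
        + (#{S ∈ powersetCard t univ | posAfterDel p S = b}
          - #{S ∈ powersetCard t univ | posAfterDel q S = b}))
      = n.choose t := by
    rw [← sum_card_filter_posAfterDel p t]
    exact sum_congr rfl fun b _ => by omega
  rw [sum_add_distrib, sum_card_filter_posAfterDel_tsub_of_adjacent (by omega)
    (show (q : ℕ) = p + 1 by omega), hpeak] at hsplit
  omega

/-- For `n = h(2t+2)`, `x1 = 0^{ht-1} 1 0^{h(t+2)}` (single `1` at 0-indexed position `ht - 1`)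
and `x2 = 0^{ht} 1 0^{h(t+2)-1}` (single `1` at position `ht`), with
`M = C(n,t) - C(ht-1,⌊t/2⌋)·C(h(t+2)-1,⌈t/2⌉)`: exactly `M` channels with distinct deletion
vectors of weight exactly `t` can produce equal output multisets from `x1` and `x2`,
so exactly `M + 1` channels distinguish them in the multiset model. -/
theorem multiset_model_exact_channel_number_extremal
    (t h : ℕ) (ht : 2 ≤ t) (hh : 1 ≤ h) :
    let n := h * (2 * t + 2)
    let x1 : Fin n → Fin 2 := fun i => if (i : ℕ) = h * t - 1 then 1 else 0
    let x2 : Fin n → Fin 2 := fun i => if (i : ℕ) = h * t then 1 else 0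
    let M := n.choose t - (h * t - 1).choose (t / 2) * (h * (t + 2) - 1).choose ((t + 1) / 2)
    (∃ D1 D2 : Finset (Finset (Fin n)),
      (∀ S ∈ D1, S.card = t) ∧ (∀ S ∈ D2, S.card = t) ∧
      D1.card = M ∧ D2.card = M ∧
      Multiset.map (delWord x1) D1.val = Multiset.map (delWord x2) D2.val) ∧
    (∀ D1 D2 : Finset (Finset (Fin n)),
      (∀ S ∈ D1, S.card = t) → (∀ S ∈ D2, S.card = t) →
      D1.card = D2.card →
      Multiset.map (delWord x1) D1.val = Multiset.map (delWord x2) D2.val →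
      D1.card ≤ M) := by
  intro n x1 x2 M
  have hn : h * t < n := Nat.mul_lt_mul_of_pos_left (by omega) (by omega)
  let p : Fin n := ⟨h * t - 1, by omega⟩
  let q : Fin n := ⟨h * t, hn⟩
  have hM := sum_min_card_filter_posAfterDel ht hh rfl (p := p) (q := q) rfl rfl
  have hmap {D₁ D₂ : Finset (Finset (Fin n))} (h₁ : ∀ S ∈ D₁, #S = t) (h₂ : ∀ S ∈ D₂, #S = t) :
      D₁.val.map (delWord x1) = D₂.val.map (delWord x2)
        ↔ D₁.val.map (posAfterDel p) = D₂.val.map (posAfterDel q) := by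
    rw [map_delWord_indicator h₁ p, map_delWord_indicator h₂ q]
    exact (Multiset.map_injective (oneHotWord_injective _)).eq_iff
  refine ⟨?_, fun D₁ D₂ h₁ h₂ _ hD => ?_⟩
  · obtain ⟨D₁, hD₁, D₂, hD₂, hc₁, hc₂, hD⟩ := exists_card_eq_sum_min_card_fiber (posAfterDel p)
      (posAfterDel q) (powersetCard t univ) (powersetCard t univ) (insertNone (range n))
    have h₁ : ∀ S ∈ D₁, #S = t := fun S hS => mem_powersetCard_univ.1 (hD₁ hS)
    have h₂ : ∀ S ∈ D₂, #S = t := fun S hS => mem_powersetCard_univ.1 (hD₂ hS)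
    exact ⟨D₁, D₂, h₁, h₂, hc₁.trans hM, hc₂.trans hM, (hmap h₁ h₂).2 hD⟩
  · refine (card_le_sum_min_card_fiber (fun S hS => mem_powersetCard_univ.2 (h₁ S hS))
      (fun S hS => mem_powersetCard_univ.2 (h₂ S hS))
      (fun S _ => posAfterDel_mem_insertNone_range p S) ((hmap h₁ h₂).1 hD)).trans_eq hM
end

section
/- Let t ≥ 2 be an integer and n ≥ 2t+2 be an even integer. Consider the binary words x1 = 0^{n/2−1} 1 0^{n/2} and x2 = 0^{n/2} 1 0^{n/2−1}, and let M = V_2(n,t) − Σ_{i=0}^{t} C(n/2−1, ⌊i/2⌋)·C(n/2−1, ⌈i/2⌉). Then: (1) there exist sets D1 and D2 of deletion vectors for length-n words, each vector of weight at most t, with |D1| = |D2| = M, such that the output multiset of D1 on x1 equals the output multiset of D2 on x2; and (2) for any such pair of sets of deletion vectors of weight at most t with equal output multisets on x1 and x2, |D1| ≤ M. In other words, exactly M + 1 channels are enough to distinguish x1 from x2 in the multiset model with at most t deletions per channel. -/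
/-- Binary Hamming ball volume `V₂(n,t) = ∑_{i=0}^{t} C(n,i)`. -/
def V₂ (n t : ℕ) : ℕ := ∑ i ∈ Finset.range (t + 1), n.choose i

open Finset

section Matching

variable {α β : Type*} [DecidableEq β]

theorem Finset.count_map_val (D : Finset α) (f : α → β) (w : β) :
    (D.val.map f).count w = #{S ∈ D | f S = w} := by
  rw [Multiset.count_map, card_def, filter_val]
  simp only [eq_comm]

theorem exists_subset_map_val_eq_bind_replicate (Ω : Finset α) (W : Finset β) (f : α → β)
    (c : β → ℕ) (hc : ∀ w, c w ≤ #{S ∈ Ω | f S = w}) :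
    ∃ D ⊆ Ω, #D = ∑ w ∈ W, c w ∧
      D.val.map f = W.val.bind fun w => Multiset.replicate (c w) w := by
  choose E hEsub hEcard using fun w => exists_subset_card_eq (hc w)
  have hEf : ∀ w, ∀ S ∈ E w, f S = w := fun w S hS => (mem_filter.1 (hEsub w hS)).2
  have hdisj : (W : Set β).PairwiseDisjoint E := fun w _ w' _ hne =>
    disjoint_left.2 fun S hS hS' => hne ((hEf w S hS).symm.trans (hEf w' S hS'))
  refine ⟨W.disjiUnion E hdisj, fun S hS => ?_,
    (card_disjiUnion _ _ _).trans (sum_congr rfl fun w _ => hEcard w), ?_⟩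
  · obtain ⟨w, -, hSw⟩ := mem_disjiUnion.1 hS
    exact (mem_filter.1 (hEsub w hSw)).1
  · rw [disjiUnion_val, Multiset.map_bind]
    refine Multiset.bind_congr fun w _ => ?_
    rw [← hEcard w, card_def, ← Multiset.card_map f]
    exact Multiset.eq_replicate_of_mem (by simpa using hEf w)

theorem exists_subsets_map_val_eq_of_card_eq_sum_min (Ω : Finset α) (W : Finset β)
    (f g : α → β) :
    ∃ D₁ ⊆ Ω, ∃ D₂ ⊆ Ω,
      #D₁ = ∑ w ∈ W, min #{S ∈ Ω | f S = w} #{S ∈ Ω | g S = w} ∧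
      #D₂ = ∑ w ∈ W, min #{S ∈ Ω | f S = w} #{S ∈ Ω | g S = w} ∧
      D₁.val.map f = D₂.val.map g := by
  obtain ⟨D₁, hD₁, hcard₁, hmap₁⟩ :=
    exists_subset_map_val_eq_bind_replicate Ω W f _ fun w => min_le_left _ _
  obtain ⟨D₂, hD₂, hcard₂, hmap₂⟩ :=
    exists_subset_map_val_eq_bind_replicate Ω W g _ fun w => min_le_right _ _
  exact ⟨D₁, hD₁, D₂, hD₂, hcard₁, hcard₂, hmap₁.trans hmap₂.symm⟩

theorem card_le_sum_min_of_map_val_eq {Ω D₁ D₂ : Finset α} {W : Finset β} {f g : α → β}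
    (hf : ∀ S ∈ Ω, f S ∈ W) (hD₁ : D₁ ⊆ Ω) (hD₂ : D₂ ⊆ Ω) (h : D₁.val.map f = D₂.val.map g) :
    #D₁ ≤ ∑ w ∈ W, min #{S ∈ Ω | f S = w} #{S ∈ Ω | g S = w} := by
  rw [card_eq_sum_card_fiberwise fun S hS => hf S (hD₁ hS)]
  refine sum_le_sum fun w _ => le_min (card_le_card (filter_subset_filter _ hD₁)) ?_
  rw [← count_map_val, h, count_map_val]
  exact card_le_card (filter_subset_filter _ hD₂)

end Matching

section Binomial

theorem add_sum_range_tsub_of_unimodal {e : ℕ → ℕ} {j k : ℕ} (hjk : j ≤ k)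
    (hmono : ∀ i < j, e i ≤ e (i + 1)) (hanti : ∀ i, j ≤ i → i < k → e (i + 1) ≤ e i) :
    e 0 + ∑ i ∈ range k, (e (i + 1) - e i) = e j := by
  rw [← sum_range_add_sum_Ico _ hjk,
    sum_eq_zero fun i hi => tsub_eq_zero_of_le (hanti i (mem_Ico.1 hi).1 (mem_Ico.1 hi).2),
    add_zero]
  clear hanti hjk
  induction j with
  | zero => simp
  | succ j ih =>
    rw [sum_range_succ, ← add_assoc, ih fun i hi => hmono i (by omega),
      Nat.add_sub_cancel' (hmono j j.lt_succ_self)]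

variable {a k j : ℕ}

theorem choose_sub_mul_choose_exchange (hk : k ≤ a) (hj : j < k) :
    (j + 1) * (a - k + j + 1) * (a.choose (k - (j + 1)) * a.choose (j + 1)) =
      (k - j) * (a - j) * (a.choose (k - j) * a.choose j) := by
  have h₁ := Nat.choose_succ_right_eq a j
  have h₂ := Nat.choose_succ_right_eq a (k - (j + 1))
  rw [show k - (j + 1) + 1 = k - j by omega,
    show a - (k - (j + 1)) = a - k + j + 1 by omega] at h₂
  calc (j + 1) * (a - k + j + 1) * (a.choose (k - (j + 1)) * a.choose (j + 1))
      = (a.choose (k - (j + 1)) * (a - k + j + 1)) * (a.choose (j + 1) * (j + 1)) := by ring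
    _ = (k - j) * (a - j) * (a.choose (k - j) * a.choose j) := by rw [← h₂, h₁]; ring

theorem choose_sub_mul_choose_le_succ (hk : k ≤ a) (hj : 2 * j + 1 ≤ k) :
    a.choose (k - j) * a.choose j ≤ a.choose (k - (j + 1)) * a.choose (j + 1) := by
  refine le_of_mul_le_mul_left ?_ (Nat.mul_pos (by omega : 0 < k - j) (by omega : 0 < a - j))
  rw [← choose_sub_mul_choose_exchange hk (by omega)]
  exact Nat.mul_le_mul_right _ (Nat.mul_le_mul (by omega) (by omega))

theorem choose_sub_succ_mul_choose_succ_le (hk : k ≤ a) (hj : k ≤ 2 * j) (hjk : j < k) :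
    a.choose (k - (j + 1)) * a.choose (j + 1) ≤ a.choose (k - j) * a.choose j := by
  refine le_of_mul_le_mul_left ?_
    (Nat.mul_pos (by omega : 0 < j + 1) (by omega : 0 < a - k + j + 1))
  rw [choose_sub_mul_choose_exchange hk hjk]
  exact Nat.mul_le_mul_right _ (Nat.mul_le_mul (by omega) (by omega))

theorem choose_add_sum_range_choose_tsub (hk : k ≤ a) :
    a.choose k + ∑ j ∈ range k,
        (a.choose (k - (j + 1)) * (a + 1).choose (j + 1) - (a + 1).choose (k - j) * a.choose j) =
      a.choose (k / 2) * a.choose ((k + 1) / 2) := by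
  set e : ℕ → ℕ := fun j => a.choose (k - j) * a.choose j
  have hterm : ∀ j ∈ range k, a.choose (k - (j + 1)) * (a + 1).choose (j + 1) -
      (a + 1).choose (k - j) * a.choose j = e (j + 1) - e j := by
    intro j hj
    obtain ⟨i, hi⟩ : ∃ i, k - j = i + 1 := ⟨k - (j + 1), by have := mem_range.1 hj; omega⟩
    simp only [e, hi, show k - (j + 1) = i by omega, Nat.choose_succ_succ', mul_add, add_mul,
      Nat.add_sub_add_left, mul_comm (a.choose (i + 1))]
  have he₀ : e 0 = a.choose k := by simp [e]
  have hpeak : e ((k + 1) / 2) = a.choose (k / 2) * a.choose ((k + 1) / 2) := by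
    simp only [e, show k - (k + 1) / 2 = k / 2 by omega]
  rw [sum_congr rfl hterm, ← he₀, ← hpeak]
  exact add_sum_range_tsub_of_unimodal (by omega)
    (fun i hi => choose_sub_mul_choose_le_succ hk (by omega))
    (fun i hi hik => choose_sub_succ_mul_choose_succ_le hk (by omega) hik)

end Binomial

section Splitting

variable {α : Type*} [LinearOrder α]

theorem card_eq_card_filter_lt_add_card_filter_gt {T : Finset α} {m : α} (hm : m ∈ T) :
    #T = #{i ∈ T | i < m} + #{i ∈ T | m < i} + 1 := by
  have h : {i ∈ T | ¬ i < m} = insert m {i ∈ T | m < i} := by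
    ext i
    simp only [mem_filter, not_lt, mem_insert, le_iff_lt_or_eq]
    constructor
    · rintro ⟨hi, h | rfl⟩ <;> simp_all
    · rintro (rfl | ⟨hi, h⟩) <;> simp_all
  rw [← card_filter_add_card_filter_not (p := (· < m)), h, card_insert_of_notMem (by simp),
    add_assoc]

theorem filter_insert_union_of_lt_of_gt {A B : Finset α} {m : α}
    (hA : ∀ a ∈ A, a < m) (hB : ∀ b ∈ B, m < b) :
    {i ∈ insert m (A ∪ B) | i < m} = A ∧ {i ∈ insert m (A ∪ B) | m < i} = B := by
  constructor <;> ext i <;> simp only [mem_filter, mem_insert, mem_union] <;> grind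

theorem insert_filter_lt_union_filter_gt {T : Finset α} {m : α} (hm : m ∈ T) :
    insert m ({i ∈ T | i < m} ∪ {i ∈ T | m < i}) = T := by
  ext i
  simp only [mem_insert, mem_union, mem_filter]
  grind

variable {n : ℕ}

theorem Fin.card_filter_lt_le (T : Finset (Fin n)) (m : Fin n) : #{i ∈ T | i < m} ≤ m := by
  simpa using card_le_card (s := {i ∈ T | i < m}) (t := Iio m) (fun i hi => by simp_all)

theorem Fin.card_filter_gt_le (T : Finset (Fin n)) (m : Fin n) :
    #{i ∈ T | m < i} ≤ n - 1 - m := by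
  simpa using card_le_card (s := {i ∈ T | m < i}) (t := Ioi m) (fun i hi => by simp_all)

theorem Fin.card_filter_mem_card_filter_lt_card_filter_gt (m : Fin n) (p q : ℕ) :
    #{T : Finset (Fin n) | m ∈ T ∧ #{i ∈ T | i < m} = p ∧ #{i ∈ T | m < i} = q} =
      (m : ℕ).choose p * (n - 1 - m).choose q := by
  rw [← Fin.card_Ioi, ← Fin.card_Iio, ← card_powersetCard, ← card_powersetCard, ← card_product]
  refine card_nbij' (fun T => ({i ∈ T | i < m}, {i ∈ T | m < i}))
    (fun AB => insert m (AB.1 ∪ AB.2)) ?_ ?_ ?_ ?_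
  · intro T hT
    simp_all [subset_iff]
  · rintro ⟨A, B⟩ hAB
    simp only [coe_product, Set.mem_prod, mem_coe, mem_powersetCard, subset_iff, mem_Iio,
      mem_Ioi] at hAB
    obtain ⟨hA, hB⟩ := filter_insert_union_of_lt_of_gt hAB.1.1 hAB.2.1
    simp [hA, hB, hAB.1.2, hAB.2.2]
  · intro T hT
    exact insert_filter_lt_union_filter_gt (mem_filter.1 hT).2.1
  · rintro ⟨A, B⟩ hAB
    simp only [coe_product, Set.mem_prod, mem_coe, mem_powersetCard, subset_iff, mem_Iio,
      mem_Ioi] at hAB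
    obtain ⟨hA, hB⟩ := filter_insert_union_of_lt_of_gt hAB.1.1 hAB.2.1
    simp [hA, hB]

end Splitting

theorem card_filter_mem_and_card_eq {α : Type*} [Fintype α] [DecidableEq α] (m m' : α)
    (P : ℕ → Prop) [DecidablePred P] :
    #{S : Finset α | m ∈ S ∧ P #S} = #{S : Finset α | m' ∈ S ∧ P #S} := by
  refine card_equiv (Equiv.swap m m').finsetCongr fun S => ?_
  simp [Equiv.finsetCongr_apply, mem_map_equiv, Equiv.symm_swap, Equiv.swap_apply_right]

section Words

def zerosOneZeros (p q : ℕ) : List (Fin 2) := List.replicate p 0 ++ 1 :: List.replicate q 0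

theorem zerosOneZeros_inj {p q p' q' : ℕ} :
    zerosOneZeros p q = zerosOneZeros p' q' ↔ p = p' ∧ q = q' := by
  refine ⟨fun h => ?_, by rintro ⟨rfl, rfl⟩; rfl⟩
  have hidx (p q : ℕ) : (zerosOneZeros p q).idxOf 1 = p := by
    simp [zerosOneZeros, List.idxOf_append_of_notMem, List.mem_replicate]
  have hp : p = p' := by rw [← hidx p q, h, hidx]
  have hlen := congrArg List.length h
  simp only [zerosOneZeros, List.length_append, List.length_replicate, List.length_cons] at hlen
  omega

theorem zerosOneZeros_ne_replicate (p q ℓ : ℕ) : zerosOneZeros p q ≠ List.replicate ℓ 0 := by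
  intro h
  have : (1 : Fin 2) ∈ List.replicate ℓ 0 := h ▸ by simp [zerosOneZeros]
  simp [List.mem_replicate] at this

variable {n : ℕ} {m : Fin n}

theorem List.map_single_of_notMem {l : List (Fin n)} (hm : m ∉ l) :
    l.map (Pi.single m (1 : Fin 2)) = List.replicate l.length 0 := by
  rw [List.eq_replicate_iff]
  refine ⟨List.length_map _, ?_⟩
  simp only [List.mem_map, forall_exists_index, and_imp]
  rintro _ i hi rfl
  exact Pi.single_eq_of_ne (ne_of_mem_of_not_mem hi hm) _

theorem List.map_single_of_pairwise_lt {l : List (Fin n)} (hl : l.Pairwise (· < ·))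
    (hm : m ∈ l) :
    l.map (Pi.single m (1 : Fin 2)) = zerosOneZeros (l.countP (· < m)) (l.countP (m < ·)) := by
  obtain ⟨l₁, l₂, rfl⟩ := List.append_of_mem hm
  simp only [List.pairwise_append, List.pairwise_cons, List.mem_cons] at hl
  have h₁ : ∀ i ∈ l₁, i < m := fun i hi => hl.2.2 i hi m (Or.inl rfl)
  have h₂ : ∀ i ∈ l₂, m < i := hl.2.1.1
  have hm₁ : m ∉ l₁ := fun h => lt_irrefl m (h₁ m h)
  have hm₂ : m ∉ l₂ := fun h => lt_irrefl m (h₂ m h)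
  have hc₁ : l₁.countP (· < m) = l₁.length := List.countP_eq_length.2 (by simpa using h₁)
  have hc₂ : l₁.countP (m < ·) = 0 :=
    List.countP_eq_zero.2 (by simpa using fun i hi => (h₁ i hi).le)
  have hc₃ : l₂.countP (· < m) = 0 :=
    List.countP_eq_zero.2 (by simpa using fun i hi => (h₂ i hi).le)
  have hc₄ : l₂.countP (m < ·) = l₂.length := List.countP_eq_length.2 (by simpa using h₂)
  simp [List.map_single_of_notMem hm₁, List.map_single_of_notMem hm₂, List.countP_append,
    hc₁, hc₂, hc₃, hc₄, zerosOneZeros]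

theorem Finset.countP_sort {α : Type*} [LinearOrder α] (s : Finset α) (p : α → Prop)
    [DecidablePred p] : (s.sort (· ≤ ·)).countP (fun a => decide (p a)) = #{a ∈ s | p a} := by
  rw [← Multiset.coe_countP, Finset.sort_eq, Multiset.countP_eq_card_filter]
  rfl

theorem delWord_single (m : Fin n) (S : Finset (Fin n)) :
    delWord (Pi.single m 1) S =
      if m ∈ S then List.replicate (n - #S) 0
      else zerosOneZeros #{i ∈ Sᶜ | i < m} #{i ∈ Sᶜ | m < i} := by
  have hsort := (Finset.sortedLT_sort (Finset.univ \ S)).pairwise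
  rw [← compl_eq_univ_sdiff] at hsort
  rw [delWord, ← compl_eq_univ_sdiff]
  split_ifs with hm
  · rw [List.map_single_of_notMem (by simpa using hm), Finset.length_sort, card_compl,
      Fintype.card_fin]
  · rw [List.map_single_of_pairwise_lt hsort (by simpa using hm), countP_sort, countP_sort]

end Words

section DeletionCounts

def deletionVectors (n t : ℕ) : Finset (Finset (Fin n)) := {S | #S ≤ t}

def outputCount {q n : ℕ} (t : ℕ) (x : Fin n → Fin q) (w : List (Fin q)) : ℕ :=
  #{S ∈ deletionVectors n t | delWord x S = w}

theorem card_deletionVectors (n t : ℕ) : #(deletionVectors n t) = V₂ n t := by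
  rw [card_eq_sum_card_fiberwise (f := card) (t := range (t + 1))
    (fun S hS => by simpa [deletionVectors, Nat.lt_succ_iff] using hS), V₂]
  refine sum_congr rfl fun i hi => ?_
  have hfiber : {S ∈ deletionVectors n t | #S = i} = powersetCard i univ := by
    ext S
    simp only [deletionVectors, mem_filter, mem_univ, true_and, mem_powersetCard, subset_univ,
      mem_range] at hi ⊢
    omega
  rw [hfiber, card_powersetCard, card_univ, Fintype.card_fin]

variable {n : ℕ} (t : ℕ) (m : Fin n)

theorem delWord_single_eq_zerosOneZeros_iff (S : Finset (Fin n)) (p q : ℕ) :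
    delWord (Pi.single m (1 : Fin 2)) S = zerosOneZeros p q ↔
      m ∈ Sᶜ ∧ #{i ∈ Sᶜ | i < m} = p ∧ #{i ∈ Sᶜ | m < i} = q := by
  rw [delWord_single, mem_compl]
  split_ifs with hm
  · simpa [hm] using (zerosOneZeros_ne_replicate _ _ _).symm
  · simp [hm, zerosOneZeros_inj]

theorem delWord_single_eq_replicate_iff (S : Finset (Fin n)) (ℓ : ℕ) :
    delWord (Pi.single m (1 : Fin 2)) S = List.replicate ℓ 0 ↔ m ∈ S ∧ n - #S = ℓ := by
  rw [delWord_single]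
  split_ifs with hm
  · simp [hm, List.replicate_inj]
  · simpa [hm] using zerosOneZeros_ne_replicate _ _ _

theorem outputCount_single_zerosOneZeros (p q : ℕ) :
    outputCount t (Pi.single m (1 : Fin 2)) (zerosOneZeros p q) =
      if n - 1 - (p + q) ≤ t then (m : ℕ).choose p * (n - 1 - m).choose q else 0 := by
  have hcompl : outputCount t (Pi.single m (1 : Fin 2)) (zerosOneZeros p q) =
      #{T : Finset (Fin n) |
        (m ∈ T ∧ #{i ∈ T | i < m} = p ∧ #{i ∈ T | m < i} = q) ∧ n - 1 - (p + q) ≤ t} := by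
    refine card_nbij' compl compl (fun S hS => ?_) (fun T hT => ?_) (fun S _ => compl_compl S)
      (fun T _ => compl_compl T)
    · simp only [deletionVectors, coe_filter, mem_filter, mem_univ, true_and, Set.mem_ofPred_eq,
        delWord_single_eq_zerosOneZeros_iff] at hS ⊢
      obtain ⟨hSt, hm, hp, hq⟩ := hS
      have hcard := card_eq_card_filter_lt_add_card_filter_gt hm
      rw [card_compl, Fintype.card_fin] at hcard
      exact ⟨⟨hm, hp, hq⟩, by omega⟩
    · simp only [deletionVectors, coe_filter, mem_filter, mem_univ, true_and, Set.mem_ofPred_eq,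
        delWord_single_eq_zerosOneZeros_iff, compl_compl] at hT ⊢
      obtain ⟨⟨hm, hp, hq⟩, hpq⟩ := hT
      have hcard := card_eq_card_filter_lt_add_card_filter_gt hm
      rw [card_compl, Fintype.card_fin]
      exact ⟨by omega, hm, hp, hq⟩
  rw [hcompl, ← Fin.card_filter_mem_card_filter_lt_card_filter_gt]
  split_ifs with h <;> simp [h]

theorem outputCount_single_replicate (m' : Fin n) (ℓ : ℕ) :
    outputCount t (Pi.single m (1 : Fin 2)) (List.replicate ℓ 0) =
      outputCount t (Pi.single m' (1 : Fin 2)) (List.replicate ℓ 0) := by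
  simp only [outputCount, deletionVectors, filter_filter, delWord_single_eq_replicate_iff]
  simpa only [and_left_comm] using card_filter_mem_and_card_eq m m' (fun k => k ≤ t ∧ n - k = ℓ)

end DeletionCounts

section AdjacentOnes

def x₁ (a : ℕ) : Fin (2 * a + 2) → Fin 2 := Pi.single ⟨a, by omega⟩ 1

def x₂ (a : ℕ) : Fin (2 * a + 2) → Fin 2 := Pi.single ⟨a + 1, by omega⟩ 1

/-- Contains every output of `x₁ a` under at most `t` deletions; `⟨k, v⟩` stands for
`0^(a-u) 1 0^(a+1-v)` with `k = u + v`. -/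
def candidateOutputs (a t : ℕ) : Finset (List (Fin 2)) :=
  (range (2 * a + 3)).image (List.replicate · 0) ∪
    ((range (t + 1)).sigma fun k => range (k + 1)).image
      fun x => zerosOneZeros (a - (x.1 - x.2)) (a + 1 - x.2)

variable {a t : ℕ}

theorem delWord_x₁_mem_candidateOutputs {S : Finset (Fin (2 * a + 2))} (hS : #S ≤ t) :
    delWord (x₁ a) S ∈ candidateOutputs a t := by
  rw [x₁, delWord_single, candidateOutputs]
  split_ifs with hm
  · exact mem_union_left _ (mem_image_of_mem _ (mem_range.2 (by omega)))
  · have hcard := card_eq_card_filter_lt_add_card_filter_gt (mem_compl.2 hm)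
    have hlt := Fin.card_filter_lt_le Sᶜ ⟨a, by omega⟩
    have hgt := Fin.card_filter_gt_le Sᶜ ⟨a, by omega⟩
    rw [card_compl, Fintype.card_fin] at hcard
    dsimp only at hlt hgt
    refine mem_union_right _
      (mem_image.2 ⟨⟨#S, a + 1 - #{i ∈ Sᶜ | ⟨a, by omega⟩ < i}⟩, ?_, ?_⟩)
    · simp only [mem_sigma, mem_range]
      omega
    · simp only [zerosOneZeros_inj]
      omega

theorem outputCount_x₁_zerosOneZeros {k v : ℕ} (hkt : k ≤ t) (hka : k ≤ a) (hvk : v ≤ k) :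
    outputCount t (x₁ a) (zerosOneZeros (a - (k - v)) (a + 1 - v)) =
      a.choose (k - v) * (a + 1).choose v := by
  rw [x₁, outputCount_single_zerosOneZeros, if_pos (by omega)]
  dsimp only
  rw [Nat.choose_symm (by omega), show 2 * a + 2 - 1 - a = a + 1 by omega,
    Nat.choose_symm (by omega)]

theorem outputCount_x₂_zerosOneZeros {k v : ℕ} (hkt : k ≤ t) (hka : k ≤ a) (hvk : v ≤ k) :
    outputCount t (x₂ a) (zerosOneZeros (a - (k - v)) (a + 1 - v)) =
      (a + 1).choose (k - v + 1) * a.choose (a + 1 - v) := by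
  rw [x₂, outputCount_single_zerosOneZeros, if_pos (by omega)]
  dsimp only
  rw [Nat.choose_symm_of_eq_add (show a + 1 = a - (k - v) + (k - v + 1) by omega),
    show 2 * a + 2 - 1 - (a + 1) = a by omega]

theorem sum_range_outputCount_tsub {k : ℕ} (hkt : k ≤ t) (hka : k ≤ a) :
    ∑ v ∈ range (k + 1),
        (outputCount t (x₁ a) (zerosOneZeros (a - (k - v)) (a + 1 - v)) -
          outputCount t (x₂ a) (zerosOneZeros (a - (k - v)) (a + 1 - v))) =
      a.choose (k / 2) * a.choose ((k + 1) / 2) := by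
  rw [sum_range_succ', add_comm, ← choose_add_sum_range_choose_tsub hka]
  congr 1
  · rw [outputCount_x₁_zerosOneZeros hkt hka k.zero_le,
      outputCount_x₂_zerosOneZeros hkt hka k.zero_le, Nat.sub_zero, Nat.sub_zero,
      Nat.choose_eq_zero_of_lt a.lt_succ_self]
    simp
  · refine sum_congr rfl fun j hj => ?_
    have hjk := mem_range.1 hj
    rw [outputCount_x₁_zerosOneZeros hkt hka hjk, outputCount_x₂_zerosOneZeros hkt hka hjk,
      show k - (j + 1) + 1 = k - j by omega, show a + 1 - (j + 1) = a - j by omega,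
      Nat.choose_symm (by omega)]

theorem sum_candidateOutputs_outputCount_tsub (hta : t ≤ a) :
    ∑ w ∈ candidateOutputs a t, (outputCount t (x₁ a) w - outputCount t (x₂ a) w) =
      ∑ k ∈ range (t + 1), a.choose (k / 2) * a.choose ((k + 1) / 2) := by
  have hdisj : Disjoint ((range (2 * a + 3)).image (List.replicate · 0))
      (((range (t + 1)).sigma fun k => range (k + 1)).image
        fun x => zerosOneZeros (a - (x.1 - x.2)) (a + 1 - x.2)) := by
    simp only [disjoint_left, mem_image, not_exists, not_and]
    rintro _ ⟨ℓ, -, rfl⟩ x - h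
    exact zerosOneZeros_ne_replicate _ _ _ h
  have hinj : Set.InjOn (fun x : Σ _ : ℕ, ℕ => zerosOneZeros (a - (x.1 - x.2)) (a + 1 - x.2))
      ((range (t + 1)).sigma fun k => range (k + 1)) := by
    rintro ⟨k, v⟩ hkv ⟨k', v'⟩ hkv' h
    simp only [coe_sigma, Set.mem_sigma_iff, coe_range, Set.mem_Iio, zerosOneZeros_inj]
      at hkv hkv' h
    obtain rfl : v = v' := by omega
    obtain rfl : k = k' := by omega
    rfl
  rw [candidateOutputs, sum_union hdisj, sum_eq_zero, zero_add, sum_image hinj, sum_sigma]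
  · refine sum_congr rfl fun k hk => ?_
    have hkt := mem_range.1 hk
    exact sum_range_outputCount_tsub (by omega) (by omega)
  · rintro _ hw
    obtain ⟨ℓ, -, rfl⟩ := mem_image.1 hw
    rw [x₁, x₂, outputCount_single_replicate, tsub_self]

theorem sum_min_outputCount_add (hta : t ≤ a) :
    ∑ w ∈ candidateOutputs a t, min (outputCount t (x₁ a) w) (outputCount t (x₂ a) w) +
        ∑ k ∈ range (t + 1), a.choose (k / 2) * a.choose ((k + 1) / 2) =
      V₂ (2 * a + 2) t := by
  rw [← sum_candidateOutputs_outputCount_tsub hta, ← sum_add_distrib, ← card_deletionVectors,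
    card_eq_sum_card_fiberwise fun S hS =>
      delWord_x₁_mem_candidateOutputs (by simpa [deletionVectors] using hS)]
  exact sum_congr rfl fun w _ => by rw [add_comm, tsub_add_min]; rfl

end AdjacentOnes

theorem multiset_model_exact_channel_number_at_most_t_general
    (t n : ℕ) (hn : 2 * t + 2 ≤ n) (heven : Even n) :
    let x1 : Fin n → Fin 2 := fun i => if (i : ℕ) = n / 2 - 1 then 1 else 0
    let x2 : Fin n → Fin 2 := fun i => if (i : ℕ) = n / 2 then 1 else 0
    let M := V₂ n t -
      ∑ i ∈ Finset.range (t + 1), (n / 2 - 1).choose (i / 2) * (n / 2 - 1).choose ((i + 1) / 2)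
    (∃ D1 D2 : Finset (Finset (Fin n)),
      (∀ S ∈ D1, S.card ≤ t) ∧ (∀ S ∈ D2, S.card ≤ t) ∧
      D1.card = M ∧ D2.card = M ∧
      Multiset.map (delWord x1) D1.val = Multiset.map (delWord x2) D2.val) ∧
    (∀ D1 D2 : Finset (Finset (Fin n)),
      (∀ S ∈ D1, S.card ≤ t) → (∀ S ∈ D2, S.card ≤ t) →
      D1.card = D2.card →
      Multiset.map (delWord x1) D1.val = Multiset.map (delWord x2) D2.val →
      D1.card ≤ M) := by
  intro x1 x2 M
  obtain ⟨a, rfl⟩ : ∃ a, n = 2 * a + 2 := ⟨n / 2 - 1, by obtain ⟨r, rfl⟩ := heven; omega⟩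
  have ha : (2 * a + 2) / 2 = a + 1 := by omega
  have hx1 : x1 = x₁ a := by funext i; simp [x1, x₁, Pi.single_apply, Fin.ext_iff, ha]
  have hx2 : x2 = x₂ a := by funext i; simp [x2, x₂, Pi.single_apply, Fin.ext_iff, ha]
  have hM : M = ∑ w ∈ candidateOutputs a t,
      min (outputCount t (x₁ a) w) (outputCount t (x₂ a) w) := by
    have := sum_min_outputCount_add (a := a) (t := t) (by omega)
    simp only [M, ha, Nat.add_sub_cancel]
    omega
  have hsub (D : Finset (Finset (Fin (2 * a + 2)))) :
      (∀ S ∈ D, #S ≤ t) ↔ D ⊆ deletionVectors (2 * a + 2) t := by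
    simp [subset_iff, deletionVectors]
  rw [hx1, hx2, hM]
  refine ⟨?_, fun D₁ D₂ hD₁ hD₂ _ h => ?_⟩
  · obtain ⟨D₁, hD₁, D₂, hD₂, h₁, h₂, h⟩ := exists_subsets_map_val_eq_of_card_eq_sum_min
      (deletionVectors (2 * a + 2) t) (candidateOutputs a t) (delWord (x₁ a)) (delWord (x₂ a))
    exact ⟨D₁, D₂, (hsub D₁).2 hD₁, (hsub D₂).2 hD₂, h₁, h₂, h⟩
  · exact card_le_sum_min_of_map_val_eq
      (fun S hS => delWord_x₁_mem_candidateOutputs (by simpa [deletionVectors] using hS))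
      ((hsub D₁).1 hD₁) ((hsub D₂).1 hD₂) h

/-- For even `n ≥ 2t+2` and `t ≥ 2`, `x1 = 0^{n/2-1} 1 0^{n/2}` and `x2 = 0^{n/2} 1 0^{n/2-1}`,
with `M = V₂(n,t) - ∑_{i=0}^{t} C(n/2-1,⌊i/2⌋)·C(n/2-1,⌈i/2⌉)`: exactly `M` channels with
distinct deletion vectors of weight at most `t` can produce equal output multisets from
`x1` and `x2`, so exactly `M + 1` channels distinguish them in the multiset model. -/
theorem multiset_model_exact_channel_number_at_most_t
    (t n : ℕ) (ht : 2 ≤ t) (hn : 2 * t + 2 ≤ n) (heven : Even n) :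
    let x1 : Fin n → Fin 2 := fun i => if (i : ℕ) = n / 2 - 1 then 1 else 0
    let x2 : Fin n → Fin 2 := fun i => if (i : ℕ) = n / 2 then 1 else 0
    let M := V₂ n t -
      ∑ i ∈ Finset.range (t + 1), (n / 2 - 1).choose (i / 2) * (n / 2 - 1).choose ((i + 1) / 2)
    (∃ D1 D2 : Finset (Finset (Fin n)),
      (∀ S ∈ D1, S.card ≤ t) ∧ (∀ S ∈ D2, S.card ≤ t) ∧
      D1.card = M ∧ D2.card = M ∧
      Multiset.map (delWord x1) D1.val = Multiset.map (delWord x2) D2.val) ∧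
    (∀ D1 D2 : Finset (Finset (Fin n)),
      (∀ S ∈ D1, S.card ≤ t) → (∀ S ∈ D2, S.card ≤ t) →
      D1.card = D2.card →
      Multiset.map (delWord x1) D1.val = Multiset.map (delWord x2) D2.val →
      D1.card ≤ M) :=
  multiset_model_exact_channel_number_at_most_t_general t n hn heven
end
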